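/- arXiv:math/0606628 — 8 statements merged into one kernel-verified Lean document; each statement's English description precedes it below -/
import Mathlib

section
/- Let A be an associative (unital) algebra over a field k of characteristic not 2 or 3, with a vector space decomposition A = A0 ⊕ A1 such that A0·A0 ⊆ A0, A0·A1 + A1·A0 ⊆ A1, and A1·A1 = 0 (an associative Z2-algebra). Define the bullet product on A by x • y := (1/2)(x·y0 + y0·x), where y = y0 + y1 with y0 ∈ A0, y1 ∈ A1. Then (A, +, •) is a right unital generalized Jordan algebra: • is bilinear, right commutative (x•(y•z) = x•(z•y) for all x, y, z ∈ A), satisfies the Jordan identity (y•x)•(x•x) = (y•(x•x))•x and the Hu-Liu bullet identity x•(y•(x•x)) − (x•y)•(x•x) = 2(x•x)•(y•x) − 2((x•x)•y)•x for all x, y ∈ A, and the identity element 1 of A is a right unit: x • 1 = x for all x ∈ A. -/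
/-!
Write `a ∘ b = ½(ab + ba)` for the symmetrized product of `A`. Because `A₁·A₁ = 0`, the
projection `p` onto `A₀` along `A₁` is a unital algebra endomorphism, so `x • y = x ∘ p y` and
`p (x • y) = p x ∘ p y`. Every identity of the theorem therefore becomes an identity of `∘` with
some arguments replaced by their images under `p`: right commutativity is the commutativity of `∘`,
the Jordan identity is that of the special Jordan product at `a = p x`, and the Hu-Liu identity is
its partial linearization at `a = p x`, `b = p y`, which holds for arbitrary `x`.
-/

/-- The bullet product on an associative `Z₂`-algebra, where `p` is the
linear projection onto the even part `A₀`: `x • y = (1/2)(x·y₀ + y₀·x)`. -/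
def bulletProd {k A : Type*} [Field k] [Ring A] [Algebra k A]
    (p : A →ₗ[k] A) (x y : A) : A :=
  (1 / 2 : k) • (x * p y + p y * x)

section SymmetrizedProduct

variable (k : Type*) {A : Type*} [Field k] [Ring A] [Algebra k A]

def jordanMul (a b : A) : A :=
  (1 / 2 : k) • (a * b + b * a)

variable {k}

theorem jordanMul_comm (a b : A) : jordanMul k a b = jordanMul k b a := by
  rw [jordanMul, jordanMul, add_comm]

theorem jordanMul_one (h2 : (2 : k) ≠ 0) (a : A) : jordanMul k a 1 = a := by
  rw [jordanMul, mul_one, one_mul, ← two_smul k a, smul_smul, one_div, inv_mul_cancel₀ h2,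
    one_smul]

theorem jordanMul_jordan (b a : A) :
    jordanMul k (jordanMul k b a) (jordanMul k a a)
      = jordanMul k (jordanMul k b (jordanMul k a a)) a := by
  simp only [jordanMul, smul_add, smul_smul, smul_mul_assoc, mul_smul_comm, add_mul, mul_add,
    mul_assoc]
  module

theorem jordanMul_jordan_linearized (x a b : A) :
    jordanMul k x (jordanMul k b (jordanMul k a a))
        - jordanMul k (jordanMul k x b) (jordanMul k a a)
      = (2 : k) • jordanMul k (jordanMul k x a) (jordanMul k b a)
        - (2 : k) • jordanMul k (jordanMul k (jordanMul k x a) b) a := by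
  simp only [jordanMul, smul_add, smul_smul, smul_mul_assoc, mul_smul_comm, add_mul, mul_add,
    mul_assoc]
  module

theorem map_jordanMul {p : A →ₗ[k] A} (hmul : ∀ x y, p (x * y) = p x * p y) (a b : A) :
    p (jordanMul k a b) = jordanMul k (p a) (p b) := by
  simp only [jordanMul, map_smul, map_add, hmul]

end SymmetrizedProduct

section BulletProduct

variable {k A : Type*} [Field k] [Ring A] [Algebra k A] (p : A →ₗ[k] A)

theorem bulletProd_eq_jordanMul (x y : A) : bulletProd p x y = jordanMul k x (p y) := rfl

theorem bulletProd_add_left (x y z : A) :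
    bulletProd p (x + y) z = bulletProd p x z + bulletProd p y z := by
  simp only [bulletProd, add_mul, mul_add, smul_add]
  abel

theorem bulletProd_add_right (x y z : A) :
    bulletProd p x (y + z) = bulletProd p x y + bulletProd p x z := by
  simp only [bulletProd, map_add, add_mul, mul_add, smul_add]
  abel

theorem bulletProd_smul_left (c : k) (x y : A) :
    bulletProd p (c • x) y = c • bulletProd p x y := by
  simp only [bulletProd, smul_mul_assoc, mul_smul_comm, smul_add, smul_comm c]

theorem bulletProd_smul_right (c : k) (x y : A) :
    bulletProd p x (c • y) = c • bulletProd p x y := by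
  simp only [bulletProd, map_smul, smul_mul_assoc, mul_smul_comm, smul_add, smul_comm c]

end BulletProduct

section Projection

variable {k A : Type*} [Field k] [Ring A] [Algebra k A] {A0 A1 : Submodule k A} {p : A →ₗ[k] A}

theorem proj_idem (hp0 : ∀ a : A, p a ∈ A0) (hproj : ∀ y0 ∈ A0, ∀ y1 ∈ A1, p (y0 + y1) = y0)
    (x : A) : p (p x) = p x := by
  simpa using hproj (p x) (hp0 x) 0 A1.zero_mem

theorem proj_mul (hp0 : ∀ a : A, p a ∈ A0) (hp1 : ∀ a : A, a - p a ∈ A1)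
    (hproj : ∀ y0 ∈ A0, ∀ y1 ∈ A1, p (y0 + y1) = y0)
    (h00 : ∀ a ∈ A0, ∀ b ∈ A0, a * b ∈ A0)
    (h01 : ∀ a ∈ A0, ∀ b ∈ A1, a * b ∈ A1)
    (h10 : ∀ a ∈ A1, ∀ b ∈ A0, a * b ∈ A1)
    (h11 : ∀ a ∈ A1, ∀ b ∈ A1, a * b = 0) (x y : A) :
    p (x * y) = p x * p y := by
  have hxy : x * y = p x * p y + (p x * (y - p y) + (x - p x) * p y)
      + (x - p x) * (y - p y) := by noncomm_ring
  rw [hxy, h11 _ (hp1 x) _ (hp1 y), add_zero]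
  exact hproj _ (h00 _ (hp0 x) _ (hp0 y)) _
    (A1.add_mem (h01 _ (hp0 x) _ (hp1 y)) (h10 _ (hp1 x) _ (hp0 y)))

theorem proj_one (hp1 : ∀ a : A, a - p a ∈ A1)
    (h11 : ∀ a ∈ A1, ∀ b ∈ A1, a * b = 0) (hmul : ∀ x y, p (x * y) = p x * p y) :
    p 1 = 1 := by
  -- `1 - p 1` lies in `A₁` and is idempotent, hence zero.
  have hidem : p 1 * p 1 = p 1 := by rw [← hmul, one_mul]
  have hf : (1 - p 1) * (1 - p 1) = 1 - p 1 := by noncomm_ring; rw [hidem]; abel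
  have hf0 : 1 - p 1 = 0 := by rw [← hf, h11 _ (hp1 1) _ (hp1 1)]
  exact (sub_eq_zero.mp hf0).symm

end Projection

theorem assoc_Z2_gives_generalized_Jordan_general
    (k : Type*) [Field k] (h2 : (2 : k) ≠ 0)
    (A : Type*) [Ring A] [Algebra k A]
    (A0 A1 : Submodule k A) (p : A →ₗ[k] A)
    (hp0 : ∀ a : A, p a ∈ A0) (hp1 : ∀ a : A, a - p a ∈ A1)
    (hproj : ∀ y0 ∈ A0, ∀ y1 ∈ A1, p (y0 + y1) = y0)
    (h00 : ∀ a ∈ A0, ∀ b ∈ A0, a * b ∈ A0)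
    (h01 : ∀ a ∈ A0, ∀ b ∈ A1, a * b ∈ A1)
    (h10 : ∀ a ∈ A1, ∀ b ∈ A0, a * b ∈ A1)
    (h11 : ∀ a ∈ A1, ∀ b ∈ A1, a * b = 0) :
    -- bilinearity of the bullet product
    (∀ x y z : A, bulletProd p (x + y) z = bulletProd p x z + bulletProd p y z) ∧
    (∀ x y z : A, bulletProd p x (y + z) = bulletProd p x y + bulletProd p x z) ∧
    (∀ (c : k) (x y : A), bulletProd p (c • x) y = c • bulletProd p x y) ∧
    (∀ (c : k) (x y : A), bulletProd p x (c • y) = c • bulletProd p x y) ∧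
    -- right commutativity
    (∀ x y z : A, bulletProd p x (bulletProd p y z) = bulletProd p x (bulletProd p z y)) ∧
    -- Jordan identity
    (∀ x y : A, bulletProd p (bulletProd p y x) (bulletProd p x x)
      = bulletProd p (bulletProd p y (bulletProd p x x)) x) ∧
    -- Hu-Liu bullet identity
    (∀ x y : A, bulletProd p x (bulletProd p y (bulletProd p x x))
        - bulletProd p (bulletProd p x y) (bulletProd p x x)
      = (2 : k) • bulletProd p (bulletProd p x x) (bulletProd p y x)
        - (2 : k) • bulletProd p (bulletProd p (bulletProd p x x) y) x) ∧
    -- `1` is a right unit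
    (∀ x : A, bulletProd p x 1 = x) := by
  have hmul := proj_mul hp0 hp1 hproj h00 h01 h10 h11
  have hidem := proj_idem hp0 hproj
  refine ⟨bulletProd_add_left p, bulletProd_add_right p, bulletProd_smul_left p,
    bulletProd_smul_right p, fun x y z => ?_, fun x y => ?_, fun x y => ?_, fun x => ?_⟩
  · simp only [bulletProd_eq_jordanMul, map_jordanMul hmul, hidem, jordanMul_comm (p y)]
  · simp only [bulletProd_eq_jordanMul, map_jordanMul hmul, hidem]
    exact jordanMul_jordan y (p x)
  · simp only [bulletProd_eq_jordanMul, map_jordanMul hmul, hidem]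
    exact jordanMul_jordan_linearized x (p x) (p y)
  · rw [bulletProd_eq_jordanMul, proj_one hp1 h11 hmul, jordanMul_one h2]

/-- If `A = A₀ ⊕ A₁` is an associative `Z₂`-algebra over a field of characteristic
not `2` or `3`, then `(A, +, •)` with `x • y = (1/2)(x·y₀ + y₀·x)` is a right unital
generalized Jordan algebra. -/
theorem assoc_Z2_gives_generalized_Jordan
    (k : Type*) [Field k] (h2 : (2 : k) ≠ 0) (h3 : (3 : k) ≠ 0)
    (A : Type*) [Ring A] [Algebra k A]
    (A0 A1 : Submodule k A) (p : A →ₗ[k] A)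
    (hp0 : ∀ a : A, p a ∈ A0) (hp1 : ∀ a : A, a - p a ∈ A1)
    (hproj : ∀ y0 ∈ A0, ∀ y1 ∈ A1, p (y0 + y1) = y0)
    (h00 : ∀ a ∈ A0, ∀ b ∈ A0, a * b ∈ A0)
    (h01 : ∀ a ∈ A0, ∀ b ∈ A1, a * b ∈ A1)
    (h10 : ∀ a ∈ A1, ∀ b ∈ A0, a * b ∈ A1)
    (h11 : ∀ a ∈ A1, ∀ b ∈ A1, a * b = 0) :
    -- bilinearity of the bullet product
    (∀ x y z : A, bulletProd p (x + y) z = bulletProd p x z + bulletProd p y z) ∧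
    (∀ x y z : A, bulletProd p x (y + z) = bulletProd p x y + bulletProd p x z) ∧
    (∀ (c : k) (x y : A), bulletProd p (c • x) y = c • bulletProd p x y) ∧
    (∀ (c : k) (x y : A), bulletProd p x (c • y) = c • bulletProd p x y) ∧
    -- right commutativity
    (∀ x y z : A, bulletProd p x (bulletProd p y z) = bulletProd p x (bulletProd p z y)) ∧
    -- Jordan identity
    (∀ x y : A, bulletProd p (bulletProd p y x) (bulletProd p x x)
      = bulletProd p (bulletProd p y (bulletProd p x x)) x) ∧
    -- Hu-Liu bullet identity
    (∀ x y : A, bulletProd p x (bulletProd p y (bulletProd p x x))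
        - bulletProd p (bulletProd p x y) (bulletProd p x x)
      = (2 : k) • bulletProd p (bulletProd p x x) (bulletProd p y x)
        - (2 : k) • bulletProd p (bulletProd p (bulletProd p x x) y) x) ∧
    -- `1` is a right unit
    (∀ x : A, bulletProd p x 1 = x) :=
  assoc_Z2_gives_generalized_Jordan_general k h2 A A0 A1 p hp0 hp1 hproj h00 h01 h10 h11
end

section
/- Let (J, +, •) be a generalized Jordan algebra over a field k of characteristic not 2 or 3, and let J^ann be the k-linear span of the set {x•y − y•x : x, y ∈ J}. Then J^ann is an ideal of J, i.e., J^ann • J ⊆ J^ann and J • J^ann ⊆ J^ann. -/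
/-! Right commutativity says exactly that every left multiplication `mul x` kills the commutators
`y•z − z•y`, hence kills their span `J^ann`. So `x•u = 0` for `u ∈ J^ann`, and `u•x = u•x − x•u`
is itself a commutator. -/

theorem span_commutators_le_ker_of_rightComm {R M : Type*} [CommSemiring R] [AddCommGroup M]
    [Module R M] (mul : M →ₗ[R] M →ₗ[R] M)
    (rc : ∀ x y z : M, mul x (mul y z) = mul x (mul z y)) (x : M) :
    Submodule.span R {a : M | ∃ y z : M, a = mul y z - mul z y} ≤ LinearMap.ker (mul x) := by
  rw [Submodule.span_le]
  rintro _ ⟨y, z, rfl⟩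
  rw [SetLike.mem_coe, LinearMap.mem_ker, map_sub, rc, sub_self]

theorem annihilator_isIdeal_of_generalizedJordan_general
    (k : Type*) [Field k]
    (J : Type*) [AddCommGroup J] [Module k J]
    (mul : J →ₗ[k] J →ₗ[k] J)
    (rc : ∀ x y z : J, mul x (mul y z) = mul x (mul z y))
    (Jann : Submodule k J)
    (hJann : Jann = Submodule.span k {a : J | ∃ x y : J, a = mul x y - mul y x}) :
    ∀ u ∈ Jann, ∀ x : J, mul u x ∈ Jann ∧ mul x u ∈ Jann := by
  intro u hu x
  have hxu : mul x u = 0 := by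
    rw [hJann] at hu
    exact span_commutators_le_ker_of_rightComm mul rc x hu
  have hcomm : mul u x - mul x u ∈ Jann := by
    rw [hJann]
    exact Submodule.subset_span ⟨u, x, rfl⟩
  rw [hxu, sub_zero] at hcomm
  exact ⟨hcomm, hxu ▸ Jann.zero_mem⟩

/-- In a generalized Jordan algebra `(J, +, •)` over a field of characteristic not
`2` or `3`, the annihilator `J^ann` (the span of all commutators `x•y − y•x`) is an
ideal: `J^ann • J ⊆ J^ann` and `J • J^ann ⊆ J^ann`. -/
theorem annihilator_isIdeal_of_generalizedJordan
    (k : Type*) [Field k] (h2 : (2 : k) ≠ 0) (h3 : (3 : k) ≠ 0)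
    (J : Type*) [AddCommGroup J] [Module k J]
    (mul : J →ₗ[k] J →ₗ[k] J)
    (rc : ∀ x y z : J, mul x (mul y z) = mul x (mul z y))
    (jordan : ∀ x y : J, mul (mul y x) (mul x x) = mul (mul y (mul x x)) x)
    (huliu : ∀ x y : J, mul x (mul y (mul x x)) - mul (mul x y) (mul x x)
      = (2 : k) • mul (mul x x) (mul y x) - (2 : k) • mul (mul (mul x x) y) x)
    (Jann : Submodule k J)
    (hJann : Jann = Submodule.span k {a : J | ∃ x y : J, a = mul x y - mul y x}) :
    ∀ u ∈ Jann, ∀ x : J, mul u x ∈ Jann ∧ mul x u ∈ Jann :=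
  annihilator_isIdeal_of_generalizedJordan_general k J mul rc Jann hJann
end

section
/- Let (J, +, •) be a generalized Jordan algebra over a field k of characteristic not 2 or 3, and let J^ann be the k-linear span of {x•y − y•x : x, y ∈ J}. Then the quotient vector space J/J^ann, with the induced product (x + J^ann)•(y + J^ann) := x•y + J^ann (which is well defined since J^ann is an ideal), is a Jordan algebra: the induced product is commutative and satisfies the Jordan identity ((y•x)•(x•x)) = ((y•(x•x))•x) in J/J^ann. -/
/-!
Right commutativity `z•(x•y) = z•(y•x)` says exactly that every left multiplication kills the
commutators, hence kills `J^ann`; then `a•z = (a•z - z•a) + z•a ∈ J^ann` for `a ∈ J^ann`, so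
`J^ann` is a two-sided ideal and the product descends to `J ⧸ J^ann`. There it is commutative
because commutators vanish, and the Jordan identity holds because it holds on representatives.
-/

namespace LinearMap

variable {R M : Type*} [CommRing R] [AddCommGroup M] [Module R M] (mul : M →ₗ[R] M →ₗ[R] M)

def commutatorSpan : Submodule R M :=
  Submodule.span R {a | ∃ x y, a = mul x y - mul y x}

variable {mul}

lemma sub_mem_commutatorSpan (x y : M) : mul x y - mul y x ∈ mul.commutatorSpan :=
  Submodule.subset_span ⟨x, y, rfl⟩

lemma commutatorSpan_le_ker (rc : ∀ x y z, mul x (mul y z) = mul x (mul z y)) (z : M) :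
    mul.commutatorSpan ≤ ker (mul z) :=
  Submodule.span_le.2 fun _ ⟨x, y, hxy⟩ ↦ by simp [hxy, rc z x y]

lemma mul_mem_commutatorSpan (rc : ∀ x y z, mul x (mul y z) = mul x (mul z y))
    {a : M} (ha : a ∈ mul.commutatorSpan) (z : M) : mul a z ∈ mul.commutatorSpan := by
  have hza : mul z a = 0 := commutatorSpan_le_ker rc z ha
  simpa [hza] using sub_mem_commutatorSpan (mul := mul) a z

def quotientCommutatorSpanMul (rc : ∀ x y z, mul x (mul y z) = mul x (mul z y)) :
    M ⧸ mul.commutatorSpan →ₗ[R] M ⧸ mul.commutatorSpan →ₗ[R] M ⧸ mul.commutatorSpan :=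
  (mul.compr₂ mul.commutatorSpan.mkQ).liftQ₂ _ _
    (fun _ ha ↦ LinearMap.ext fun z ↦ by
      simpa using mul_mem_commutatorSpan rc ha z)
    (fun _ ha ↦ LinearMap.ext fun z ↦ by
      simp [show mul z _ = 0 from commutatorSpan_le_ker rc z ha])

variable (rc : ∀ x y z, mul x (mul y z) = mul x (mul z y))

@[simp]
lemma quotientCommutatorSpanMul_mk (x y : M) :
    quotientCommutatorSpanMul rc (Submodule.Quotient.mk x) (Submodule.Quotient.mk y)
      = Submodule.Quotient.mk (mul x y) :=
  rfl

lemma quotientCommutatorSpanMul_comm (a b : M ⧸ mul.commutatorSpan) :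
    quotientCommutatorSpanMul rc a b = quotientCommutatorSpanMul rc b a := by
  induction a using Submodule.Quotient.induction_on with | H x =>
  induction b using Submodule.Quotient.induction_on with | H y =>
  simpa [Submodule.Quotient.eq] using sub_mem_commutatorSpan x y

lemma quotientCommutatorSpanMul_jordan
    (jordan : ∀ x y, mul (mul y x) (mul x x) = mul (mul y (mul x x)) x)
    (a b : M ⧸ mul.commutatorSpan) :
    let qmul := quotientCommutatorSpanMul rc
    qmul (qmul b a) (qmul a a) = qmul (qmul b (qmul a a)) a := by
  induction a using Submodule.Quotient.induction_on with | H x =>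
  induction b using Submodule.Quotient.induction_on with | H y =>
  simp [jordan x y]

end LinearMap

theorem quotient_by_annihilator_isJordan_general
    (k : Type*) [Field k]
    (J : Type*) [AddCommGroup J] [Module k J]
    (mul : J →ₗ[k] J →ₗ[k] J)
    (rc : ∀ x y z : J, mul x (mul y z) = mul x (mul z y))
    (jordan : ∀ x y : J, mul (mul y x) (mul x x) = mul (mul y (mul x x)) x)
    (Jann : Submodule k J)
    (hJann : Jann = Submodule.span k {a : J | ∃ x y : J, a = mul x y - mul y x}) :
    ∃ qmul : (J ⧸ Jann) →ₗ[k] (J ⧸ Jann) →ₗ[k] (J ⧸ Jann),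
      -- the induced product is well defined: it is computed on representatives
      (∀ x y : J, qmul (Submodule.Quotient.mk x) (Submodule.Quotient.mk y)
          = (Submodule.Quotient.mk (mul x y) : J ⧸ Jann)) ∧
      -- commutativity
      (∀ a b : J ⧸ Jann, qmul a b = qmul b a) ∧
      -- Jordan identity
      (∀ a b : J ⧸ Jann, qmul (qmul b a) (qmul a a) = qmul (qmul b (qmul a a)) a) := by
  subst hJann
  exact ⟨LinearMap.quotientCommutatorSpanMul rc, LinearMap.quotientCommutatorSpanMul_mk rc,
    LinearMap.quotientCommutatorSpanMul_comm rc, LinearMap.quotientCommutatorSpanMul_jordan rc jordan⟩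

/-- For a generalized Jordan algebra `(J, +, •)` over a field of characteristic not
`2` or `3` with annihilator `J^ann = span{x•y − y•x}`, the quotient `J/J^ann`
carries a well-defined induced bilinear product `(x̄)•(ȳ) = (x•y)‾` which is
commutative and satisfies the Jordan identity, i.e. `J/J^ann` is a Jordan algebra. -/
theorem quotient_by_annihilator_isJordan
    (k : Type*) [Field k] (h2 : (2 : k) ≠ 0) (h3 : (3 : k) ≠ 0)
    (J : Type*) [AddCommGroup J] [Module k J]
    (mul : J →ₗ[k] J →ₗ[k] J)
    (rc : ∀ x y z : J, mul x (mul y z) = mul x (mul z y))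
    (jordan : ∀ x y : J, mul (mul y x) (mul x x) = mul (mul y (mul x x)) x)
    (huliu : ∀ x y : J, mul x (mul y (mul x x)) - mul (mul x y) (mul x x)
      = (2 : k) • mul (mul x x) (mul y x) - (2 : k) • mul (mul (mul x x) y) x)
    (Jann : Submodule k J)
    (hJann : Jann = Submodule.span k {a : J | ∃ x y : J, a = mul x y - mul y x}) :
    ∃ qmul : (J ⧸ Jann) →ₗ[k] (J ⧸ Jann) →ₗ[k] (J ⧸ Jann),
      -- the induced product is well defined: it is computed on representatives
      (∀ x y : J, qmul (Submodule.Quotient.mk x) (Submodule.Quotient.mk y)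
          = (Submodule.Quotient.mk (mul x y) : J ⧸ Jann)) ∧
      -- commutativity
      (∀ a b : J ⧸ Jann, qmul a b = qmul b a) ∧
      -- Jordan identity
      (∀ a b : J ⧸ Jann, qmul (qmul b a) (qmul a a) = qmul (qmul b (qmul a a)) a) :=
  quotient_by_annihilator_isJordan_general k J mul rc jordan Jann hJann
end

section
/- Let (J, +, •) be a right unital generalized Jordan algebra over a field k of characteristic not 2 or 3, with right unit 1 (so x•1 = x for all x ∈ J), and let J^ann be the k-linear span of {x•y − y•x : x, y ∈ J}. Then J^ann = {a ∈ J : 1•a = 0}. -/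
section RightCommutative

variable {k J : Type*} [CommRing k] [AddCommGroup J] [Module k J]

/-- The annihilator `J^ann` of the paper. -/
def commutatorSpan (mul : J →ₗ[k] J →ₗ[k] J) : Submodule k J :=
  Submodule.span k {a : J | ∃ x y : J, a = mul x y - mul y x}

theorem commutatorSpan_le_ker_mul (mul : J →ₗ[k] J →ₗ[k] J)
    (rc : ∀ x y z : J, mul x (mul y z) = mul x (mul z y)) (e : J) :
    commutatorSpan mul ≤ LinearMap.ker (mul e) := by
  rw [commutatorSpan, Submodule.span_le]
  rintro _ ⟨x, y, rfl⟩
  simp only [SetLike.mem_coe, LinearMap.mem_ker, map_sub, rc e x y, sub_self]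

theorem mem_commutatorSpan_of_mul_right_unit_eq_zero (mul : J →ₗ[k] J →ₗ[k] J)
    {one a : J} (hone : mul a one = a) (ha : mul one a = 0) :
    a ∈ commutatorSpan mul :=
  Submodule.subset_span ⟨a, one, by rw [hone, ha, sub_zero]⟩

end RightCommutative

theorem annihilator_eq_kernel_of_leftMul_by_right_unit_general
    (k : Type*) [Field k]
    (J : Type*) [AddCommGroup J] [Module k J]
    (mul : J →ₗ[k] J →ₗ[k] J)
    (rc : ∀ x y z : J, mul x (mul y z) = mul x (mul z y))
    (one : J) (hone : ∀ x : J, mul x one = x)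
    (Jann : Submodule k J)
    (hJann : Jann = Submodule.span k {a : J | ∃ x y : J, a = mul x y - mul y x}) :
    ∀ a : J, a ∈ Jann ↔ mul one a = 0 := by
  change Jann = commutatorSpan mul at hJann
  subst hJann
  exact fun a => ⟨fun ha => commutatorSpan_le_ker_mul mul rc one ha,
    mem_commutatorSpan_of_mul_right_unit_eq_zero mul (hone a)⟩

/-- In a right unital generalized Jordan algebra `(J, +, •)` over a field of
characteristic not `2` or `3` with right unit `1`, the annihilator
`J^ann = span{x•y − y•x}` equals `{a ∈ J : 1•a = 0}`. -/
theorem annihilator_eq_kernel_of_leftMul_by_right_unit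
    (k : Type*) [Field k] (h2 : (2 : k) ≠ 0) (h3 : (3 : k) ≠ 0)
    (J : Type*) [AddCommGroup J] [Module k J]
    (mul : J →ₗ[k] J →ₗ[k] J)
    (rc : ∀ x y z : J, mul x (mul y z) = mul x (mul z y))
    (jordan : ∀ x y : J, mul (mul y x) (mul x x) = mul (mul y (mul x x)) x)
    (huliu : ∀ x y : J, mul x (mul y (mul x x)) - mul (mul x y) (mul x x)
      = (2 : k) • mul (mul x x) (mul y x) - (2 : k) • mul (mul (mul x x) y) x)
    (one : J) (hone : ∀ x : J, mul x one = x)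
    (Jann : Submodule k J)
    (hJann : Jann = Submodule.span k {a : J | ∃ x y : J, a = mul x y - mul y x}) :
    ∀ a : J, a ∈ Jann ↔ mul one a = 0 :=
  annihilator_eq_kernel_of_leftMul_by_right_unit_general k J mul rc one hone Jann hJann
end

section
/- Let M be a vector space over a field k of characteristic not 2 or 3 with a bilinear bracket ⟨ , ⟩ that is anti-commutative: ⟨x, y⟩ = −⟨y, x⟩ for all x, y ∈ M. Then the identity ⟨⟨z,x⟩,⟨y,x⟩⟩ = ⟨⟨z,⟨x,y⟩⟩,x⟩ + ⟨⟨⟨z,y⟩,x⟩,x⟩ − ⟨⟨⟨z,x⟩,x⟩,y⟩ holds for all x, y, z ∈ M if and only if the Malcev identity ⟨⟨x,y⟩,⟨x,z⟩⟩ = ⟨⟨⟨x,y⟩,z⟩,x⟩ + ⟨⟨⟨y,z⟩,x⟩,x⟩ + ⟨⟨⟨z,x⟩,x⟩,y⟩ holds for all x, y, z ∈ M. In particular, every Malcev algebra is a generalized Malcev algebra. -/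
/-!
Anti-commutativity rewrites every degree-four bracket monomial, up to sign, as one of the five
monomials of the Malcev identity at `(x, y, z)`. In these terms the first angle identity is twice
the Malcev identity, and the second and third are its negative.
-/

section AntiCommBracket

variable {R M : Type*} [CommSemiring R] [AddCommGroup M] [Module R M] {br : M →ₗ[R] M →ₗ[R] M}

theorem bracket_swap_left (anticomm : ∀ x y : M, br x y = - br y x) (a b c : M) :
    br (br a b) c = - br (br b a) c := by
  rw [anticomm a b, map_neg, LinearMap.neg_apply]

theorem bracket_swap_right (anticomm : ∀ x y : M, br x y = - br y x) (a b c : M) :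
    br a (br b c) = - br a (br c b) := by
  rw [anticomm b c, map_neg]

theorem bracket_self_bracket_self (anticomm : ∀ x y : M, br x y = - br y x) (x z : M) :
    br x (br x z) = br (br z x) x := by
  rw [bracket_swap_right anticomm, anticomm x (br z x), neg_neg]

theorem angle_three_iff_malcev (anticomm : ∀ x y : M, br x y = - br y x) (x y z : M) :
    br (br z x) (br y x)
        = br (br z (br x y)) x + br (br (br z y) x) x - br (br (br z x) x) y ↔
      br (br x y) (br x z)
        = br (br (br x y) z) x + br (br (br y z) x) x + br (br (br z x) x) y := by
  have hlhs : br (br x y) (br x z) = - br (br z x) (br y x) := by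
    rw [bracket_swap_left anticomm x y, bracket_swap_right anticomm (br y x) x z,
      anticomm (br y x) (br z x), neg_neg]
  rw [hlhs, bracket_swap_left anticomm (br x y) z x, bracket_swap_left anticomm y z x]
  simp only [map_neg, LinearMap.neg_apply]
  constructor <;> intro h <;> linear_combination (norm := abel) -h

theorem angle_one_of_malcev (anticomm : ∀ x y : M, br x y = - br y x) (x y z : M)
    (malcev : br (br x y) (br x z)
      = br (br (br x y) z) x + br (br (br y z) x) x + br (br (br z x) x) y) :
    br (br x y) (br x z) - br (br x z) (br x y)
      = br (br (br x y) z) x - br x (br (br x y) z)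
        + br x (br x (br y z)) - br (br x (br y z)) x
        + br (br x (br x z)) y - br (br (br x z) x) y := by
  rw [anticomm (br x z), anticomm x (br (br x y) z), bracket_self_bracket_self anticomm,
    bracket_swap_left anticomm x (br y z), bracket_self_bracket_self anticomm,
    bracket_swap_left anticomm x z x, malcev]
  simp only [map_neg, LinearMap.neg_apply]
  abel

theorem angle_two_of_malcev (anticomm : ∀ x y : M, br x y = - br y x) (x y z : M)
    (malcev : br (br x y) (br x z)
      = br (br (br x y) z) x + br (br (br y z) x) x + br (br (br z x) x) y) :
    br (br y x) (br x z)
      = br (br (br y x) z) x - br y (br (br x z) x) - br (br (br y z) x) x := by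
  rw [bracket_swap_left anticomm y x, bracket_swap_left anticomm y x z, malcev,
    anticomm y (br (br x z) x), bracket_swap_left anticomm x z x]
  simp only [map_neg, LinearMap.neg_apply]
  abel

end AntiCommBracket

theorem third_angle_identity_iff_malcev_of_anticomm_general
    (k : Type*) [Field k]
    (M : Type*) [AddCommGroup M] [Module k M]
    (br : M →ₗ[k] M →ₗ[k] M)
    (anticomm : ∀ x y : M, br x y = - br y x) :
    ((∀ x y z : M,
      br (br z x) (br y x)
        = br (br z (br x y)) x + br (br (br z y) x) x - br (br (br z x) x) y)
    ↔
    (∀ x y z : M,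
      br (br x y) (br x z)
        = br (br (br x y) z) x + br (br (br y z) x) x + br (br (br z x) x) y)) ∧
    -- in particular, every Malcev algebra is a generalized Malcev algebra:
    ((∀ x y z : M,
      br (br x y) (br x z)
        = br (br (br x y) z) x + br (br (br y z) x) x + br (br (br z x) x) y) →
      -- right anti-commutativity
      (∀ x y z : M, br x (br y z) = - br x (br z y)) ∧
      -- Hu-Liu angle identity (i)
      (∀ x y z : M,
        br (br x y) (br x z) - br (br x z) (br x y)
          = br (br (br x y) z) x - br x (br (br x y) z)
            + br x (br x (br y z)) - br (br x (br y z)) x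
            + br (br x (br x z)) y - br (br (br x z) x) y) ∧
      -- Hu-Liu angle identity (ii)
      (∀ x y z : M,
        br (br y x) (br x z)
          = br (br (br y x) z) x - br y (br (br x z) x) - br (br (br y z) x) x) ∧
      -- Hu-Liu angle identity (iii)
      (∀ x y z : M,
        br (br z x) (br y x)
          = br (br z (br x y)) x + br (br (br z y) x) x - br (br (br z x) x) y)) :=
  ⟨forall₃_congr (angle_three_iff_malcev anticomm), fun malcev =>
    ⟨bracket_swap_right anticomm,
      fun x y z => angle_one_of_malcev anticomm x y z (malcev x y z),
      fun x y z => angle_two_of_malcev anticomm x y z (malcev x y z),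
      fun x y z => (angle_three_iff_malcev anticomm x y z).mpr (malcev x y z)⟩⟩

/-- For an anti-commutative bilinear bracket over a field of characteristic not `2`
or `3`, the third Hu-Liu angle identity is equivalent to the Malcev identity; in
particular (second conjunct) every Malcev algebra is a generalized Malcev algebra:
the bracket is right anti-commutative and satisfies the three Hu-Liu angle
identities. -/
theorem third_angle_identity_iff_malcev_of_anticomm
    (k : Type*) [Field k] (h2 : (2 : k) ≠ 0) (h3 : (3 : k) ≠ 0)
    (M : Type*) [AddCommGroup M] [Module k M]
    (br : M →ₗ[k] M →ₗ[k] M)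
    (anticomm : ∀ x y : M, br x y = - br y x) :
    ((∀ x y z : M,
      br (br z x) (br y x)
        = br (br z (br x y)) x + br (br (br z y) x) x - br (br (br z x) x) y)
    ↔
    (∀ x y z : M,
      br (br x y) (br x z)
        = br (br (br x y) z) x + br (br (br y z) x) x + br (br (br z x) x) y)) ∧
    -- in particular, every Malcev algebra is a generalized Malcev algebra:
    ((∀ x y z : M,
      br (br x y) (br x z)
        = br (br (br x y) z) x + br (br (br y z) x) x + br (br (br z x) x) y) →
      -- right anti-commutativity
      (∀ x y z : M, br x (br y z) = - br x (br z y)) ∧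
      -- Hu-Liu angle identity (i)
      (∀ x y z : M,
        br (br x y) (br x z) - br (br x z) (br x y)
          = br (br (br x y) z) x - br x (br (br x y) z)
            + br x (br x (br y z)) - br (br x (br y z)) x
            + br (br x (br x z)) y - br (br (br x z) x) y) ∧
      -- Hu-Liu angle identity (ii)
      (∀ x y z : M,
        br (br y x) (br x z)
          = br (br (br y x) z) x - br y (br (br x z) x) - br (br (br y z) x) x) ∧
      -- Hu-Liu angle identity (iii)
      (∀ x y z : M,
        br (br z x) (br y x)
          = br (br z (br x y)) x + br (br (br z y) x) x - br (br (br z x) x) y)) :=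
  third_angle_identity_iff_malcev_of_anticomm_general k M br anticomm
end

section
/- Let A be an alternative algebra over a field k of characteristic not 2 or 3 (i.e., x(xy) = (xx)y and (yx)x = y(xx) for all x, y ∈ A), with a vector space decomposition A = A0 ⊕ A1 such that A0·A0 ⊆ A0, A0·A1 + A1·A0 ⊆ A1, and A1·A1 = 0 (an alternative Z2-algebra). Define the angle bracket on A by ⟨x, y⟩ := x·y0 − y0·x, where y = y0 + y1 with y0 ∈ A0, y1 ∈ A1. Then (A, +, ⟨ , ⟩) is a generalized Malcev algebra: ⟨ , ⟩ is bilinear, right anti-commutative (⟨x, ⟨y, z⟩⟩ = −⟨x, ⟨z, y⟩⟩), and satisfies the three Hu-Liu angle identities: (i) ⟨⟨x,y⟩,⟨x,z⟩⟩ − ⟨⟨x,z⟩,⟨x,y⟩⟩ = ⟨⟨⟨x,y⟩,z⟩,x⟩ − ⟨x,⟨⟨x,y⟩,z⟩⟩ + ⟨x,⟨x,⟨y,z⟩⟩⟩ − ⟨⟨x,⟨y,z⟩⟩,x⟩ + ⟨⟨x,⟨x,z⟩⟩,y⟩ − ⟨⟨⟨x,z⟩,x⟩,y⟩; (ii) ⟨⟨y,x⟩,⟨x,z⟩⟩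 = ⟨⟨⟨y,x⟩,z⟩,x⟩ − ⟨y,⟨⟨x,z⟩,x⟩⟩ − ⟨⟨⟨y,z⟩,x⟩,x⟩; (iii) ⟨⟨z,x⟩,⟨y,x⟩⟩ = ⟨⟨z,⟨x,y⟩⟩,x⟩ + ⟨⟨⟨z,y⟩,x⟩,x⟩ − ⟨⟨⟨z,x⟩,x⟩,y⟩, for all x, y, z ∈ A. -/
/-!
Write `y₀ = p y`. Since `A₀A₀ ⊆ A₀` and `A₀A₁ + A₁A₀ ⊆ A₁`, the projection satisfies
`p ⁅u, w⁆ = ⁅p u, w⁆` for `w ∈ A₀`; hence `p ⟨y, z⟩ = ⁅y₀, z₀⁆`, and every nested angle bracket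
is a nested commutator `⁅x, y⁆ = xy - yx` in `x` and the even parts `x₀, y₀, z₀`. The Hu-Liu
identities (ii) and (iii) are then instances of the Malcev identity `J(x, y, ⁅x, z⁆) = ⁅J(x, y, z), x⁆`
for the commutator algebra of the alternative ring `A`, and (i) is its linearization in `x`. The
Malcev identity holds in any alternative ring because the Jacobiator `J` is six times the
(alternating) associator, and Teichmüller's identity gives `(x, y, ⁅x, z⁆) = ⁅(x, y, z), x⁆`.
-/

/-- The angle bracket on an alternative `Z₂`-algebra, where `p` is the linear
projection onto the even part `A₀`: `⟨x, y⟩ = x·y₀ − y₀·x`. -/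
def angleBracket {k A : Type*} [Field k] [NonUnitalNonAssocRing A] [Module k A]
    (p : A →ₗ[k] A) (x y : A) : A :=
  x * p y - p y * x

class IsAlternative (R : Type*) [Mul R] : Prop where
  mul_self_mul (x y : R) : x * (x * y) = x * x * y
  mul_mul_self (x y : R) : y * x * x = y * (x * x)

def jacobiator {R : Type*} [NonUnitalNonAssocRing R] (x y z : R) : R :=
  ⁅⁅x, y⁆, z⁆ + ⁅⁅y, z⁆, x⁆ + ⁅⁅z, x⁆, y⁆

namespace IsAlternative

variable {R : Type*} [NonUnitalNonAssocRing R] [IsAlternative R]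

theorem associator_self_left (x y : R) : associator x x y = 0 :=
  sub_eq_zero.2 (mul_self_mul x y).symm

theorem associator_self_right (x y : R) : associator y x x = 0 :=
  sub_eq_zero.2 (mul_mul_self x y)

theorem associator_swap_left (x y z : R) : associator y x z = -associator x y z := by
  linear_combination (norm := skip)
    associator_self_left (x + y) z - associator_self_left x z - associator_self_left y z
  simp only [associator_apply, add_mul, mul_add]
  abel

theorem associator_swap_right (x y z : R) : associator x z y = -associator x y z := by
  linear_combination (norm := skip)
    associator_self_right (y + z) x - associator_self_right y x - associator_self_right z x
  simp only [associator_apply, add_mul, mul_add]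
  abel

theorem associator_rotate (x y z : R) : associator y z x = associator x y z := by
  rw [associator_swap_right, associator_swap_left, neg_neg]

theorem associator_lie_self (x y z : R) : associator x y ⁅x, z⁆ = ⁅associator x y z, x⁆ := by
  have h₁ := associator_cocycle x x z y
  have h₂ := associator_cocycle y z x x
  rw [associator_self_left, associator_self_left, zero_mul, associator_swap_right x y z,
    associator_swap_right x y (x * z), associator_swap_right (x * x) y z] at h₁
  rw [associator_self_right, associator_self_right, mul_zero, associator_rotate x y z,
    associator_rotate x y (z * x), associator_rotate (x * x) y z] at h₂
  linear_combination (norm := skip) -h₁ - h₂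
  simp only [Ring.lie_def, associator_apply, mul_sub, sub_mul, mul_neg]
  abel

theorem jacobiator_eq_six_smul_associator (x y z : R) :
    jacobiator x y z = 6 • associator x y z := by
  have hexpand : jacobiator x y z = associator x y z - associator y x z + associator y z x
      - associator z y x + associator z x y - associator x z y := by
    simp only [jacobiator, Ring.lie_def, associator_apply, mul_sub, sub_mul]
    abel
  rw [hexpand, associator_swap_left x y z, associator_rotate x y z, associator_swap_left y z x,
    associator_rotate y z x, associator_rotate x y z, associator_swap_right x y z]
  abel

theorem jacobiator_lie_self (x y z : R) : jacobiator x y ⁅x, z⁆ = ⁅jacobiator x y z, x⁆ := by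
  rw [jacobiator_eq_six_smul_associator, jacobiator_eq_six_smul_associator, associator_lie_self]
  simp only [Ring.lie_def, smul_mul_assoc, mul_smul_comm, smul_sub]

theorem lie_huLiu_i (a b c d : R) :
    ⁅⁅a, c⁆, ⁅b, d⁆⁆ - ⁅⁅a, d⁆, ⁅b, c⁆⁆
      = ⁅⁅⁅a, c⁆, d⁆, b⁆ - ⁅a, ⁅⁅b, c⁆, d⁆⁆ + ⁅a, ⁅b, ⁅c, d⁆⁆⁆ - ⁅⁅a, ⁅c, d⁆⁆, b⁆
        + ⁅⁅a, ⁅b, d⁆⁆, c⁆ - ⁅⁅⁅a, d⁆, b⁆, c⁆ := by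
  linear_combination (norm := skip)
    jacobiator_lie_self (a + b) c d - jacobiator_lie_self a c d - jacobiator_lie_self b c d
  simp only [jacobiator, Ring.lie_def, mul_sub, sub_mul, mul_add, add_mul]
  abel

theorem lie_huLiu_ii (x y z : R) :
    ⁅⁅y, x⁆, ⁅x, z⁆⁆ = ⁅⁅⁅y, x⁆, z⁆, x⁆ - ⁅y, ⁅⁅x, z⁆, x⁆⁆ - ⁅⁅⁅y, z⁆, x⁆, x⁆ := by
  linear_combination (norm := skip) -jacobiator_lie_self x y z
  simp only [jacobiator, Ring.lie_def, mul_sub, sub_mul, mul_add, add_mul]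
  abel

theorem lie_huLiu_iii (x y z : R) :
    ⁅⁅z, x⁆, ⁅y, x⁆⁆ = ⁅⁅z, ⁅x, y⁆⁆, x⁆ + ⁅⁅⁅z, y⁆, x⁆, x⁆ - ⁅⁅⁅z, x⁆, x⁆, y⁆ := by
  linear_combination (norm := skip) -jacobiator_lie_self x y z
  simp only [jacobiator, Ring.lie_def, mul_sub, sub_mul, mul_add, add_mul]
  abel

end IsAlternative

theorem map_lie_of_mem {k A : Type*} [Ring k] [NonUnitalNonAssocRing A] [Module k A]
    {A0 A1 : Submodule k A} {p : A → A} (hp0 : ∀ a, p a ∈ A0) (hp1 : ∀ a, a - p a ∈ A1)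
    (hproj : ∀ y0 ∈ A0, ∀ y1 ∈ A1, p (y0 + y1) = y0)
    (h00 : ∀ a ∈ A0, ∀ b ∈ A0, ⁅a, b⁆ ∈ A0) (h10 : ∀ a ∈ A1, ∀ b ∈ A0, ⁅a, b⁆ ∈ A1)
    (u : A) {w : A} (hw : w ∈ A0) : p ⁅u, w⁆ = ⁅p u, w⁆ := by
  have hsplit : ⁅u, w⁆ = ⁅p u, w⁆ + ⁅u - p u, w⁆ := by
    simp only [Ring.lie_def, sub_mul, mul_sub]
    abel
  rw [hsplit]
  exact hproj _ (h00 _ (hp0 u) _ hw) _ (h10 _ (hp1 u) _ hw)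

section angleBracket

variable {k A : Type*} [Field k] [NonUnitalNonAssocRing A] [Module k A] (p : A →ₗ[k] A)

theorem angleBracket_eq_lie (x y : A) : angleBracket p x y = ⁅x, p y⁆ := rfl

theorem angleBracket_add_left (x y z : A) :
    angleBracket p (x + y) z = angleBracket p x z + angleBracket p y z := by
  simp only [angleBracket, add_mul, mul_add]
  abel

theorem angleBracket_add_right (x y z : A) :
    angleBracket p x (y + z) = angleBracket p x y + angleBracket p x z := by
  simp only [angleBracket, map_add, add_mul, mul_add]
  abel

variable [SMulCommClass k A A] [IsScalarTower k A A]

theorem angleBracket_smul_left (c : k) (x y : A) :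
    angleBracket p (c • x) y = c • angleBracket p x y := by
  simp only [angleBracket, smul_mul_assoc, mul_smul_comm, smul_sub]

theorem angleBracket_smul_right (c : k) (x y : A) :
    angleBracket p x (c • y) = c • angleBracket p x y := by
  simp only [angleBracket, map_smul, smul_mul_assoc, mul_smul_comm, smul_sub]

end angleBracket

theorem alternative_Z2_gives_generalized_Malcev_general
    (k : Type*) [Field k]
    (A : Type*) [NonUnitalNonAssocRing A] [Module k A]
    [SMulCommClass k A A] [IsScalarTower k A A]
    -- `A` is alternative
    (haltl : ∀ x y : A, x * (x * y) = (x * x) * y)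
    (haltr : ∀ x y : A, (y * x) * x = y * (x * x))
    -- `A = A₀ ⊕ A₁` with `p` the projection onto `A₀`
    (A0 A1 : Submodule k A) (p : A →ₗ[k] A)
    (hp0 : ∀ a : A, p a ∈ A0) (hp1 : ∀ a : A, a - p a ∈ A1)
    (hproj : ∀ y0 ∈ A0, ∀ y1 ∈ A1, p (y0 + y1) = y0)
    (h00 : ∀ a ∈ A0, ∀ b ∈ A0, a * b ∈ A0)
    (h01 : ∀ a ∈ A0, ∀ b ∈ A1, a * b ∈ A1)
    (h10 : ∀ a ∈ A1, ∀ b ∈ A0, a * b ∈ A1) :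
    -- bilinearity of the angle bracket
    (∀ x y z : A, angleBracket p (x + y) z = angleBracket p x z + angleBracket p y z) ∧
    (∀ x y z : A, angleBracket p x (y + z) = angleBracket p x y + angleBracket p x z) ∧
    (∀ (c : k) (x y : A), angleBracket p (c • x) y = c • angleBracket p x y) ∧
    (∀ (c : k) (x y : A), angleBracket p x (c • y) = c • angleBracket p x y) ∧
    -- right anti-commutativity
    (∀ x y z : A, angleBracket p x (angleBracket p y z)
      = - angleBracket p x (angleBracket p z y)) ∧
    -- Hu-Liu angle identity (i)
    (∀ x y z : A,
      angleBracket p (angleBracket p x y) (angleBracket p x z)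
          - angleBracket p (angleBracket p x z) (angleBracket p x y)
        = angleBracket p (angleBracket p (angleBracket p x y) z) x
          - angleBracket p x (angleBracket p (angleBracket p x y) z)
          + angleBracket p x (angleBracket p x (angleBracket p y z))
          - angleBracket p (angleBracket p x (angleBracket p y z)) x
          + angleBracket p (angleBracket p x (angleBracket p x z)) y
          - angleBracket p (angleBracket p (angleBracket p x z) x) y) ∧
    -- Hu-Liu angle identity (ii)
    (∀ x y z : A,
      angleBracket p (angleBracket p y x) (angleBracket p x z)
        = angleBracket p (angleBracket p (angleBracket p y x) z) x
          - angleBracket p y (angleBracket p (angleBracket p x z) x)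
          - angleBracket p (angleBracket p (angleBracket p y z) x) x) ∧
    -- Hu-Liu angle identity (iii)
    (∀ x y z : A,
      angleBracket p (angleBracket p z x) (angleBracket p y x)
        = angleBracket p (angleBracket p z (angleBracket p x y)) x
          + angleBracket p (angleBracket p (angleBracket p z y) x) x
          - angleBracket p (angleBracket p (angleBracket p z x) x) y) := by
  have : IsAlternative A := ⟨haltl, haltr⟩
  have hlie00 (a) (ha : a ∈ A0) (b) (hb : b ∈ A0) : ⁅a, b⁆ ∈ A0 :=
    sub_mem (h00 a ha b hb) (h00 b hb a ha)
  have hlie10 (a) (ha : a ∈ A1) (b) (hb : b ∈ A0) : ⁅a, b⁆ ∈ A1 :=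
    sub_mem (h10 a ha b hb) (h01 b hb a ha)
  have hmap := map_lie_of_mem hp0 hp1 hproj hlie00 hlie10
  refine ⟨angleBracket_add_left p, angleBracket_add_right p, angleBracket_smul_left p,
    angleBracket_smul_right p, fun x y z => ?_, fun x y z => ?_, fun x y z => ?_,
    fun x y z => ?_⟩ <;> simp only [angleBracket_eq_lie, hmap, hp0, hlie00]
  · simp only [Ring.lie_def, mul_sub, sub_mul]
    abel
  · exact IsAlternative.lie_huLiu_i x (p x) (p y) (p z)
  · exact IsAlternative.lie_huLiu_ii (p x) y (p z)
  · exact IsAlternative.lie_huLiu_iii (p x) (p y) z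

/-- If `A = A₀ ⊕ A₁` is an alternative `Z₂`-algebra over a field of characteristic
not `2` or `3`, then `(A, +, ⟨,⟩)` with `⟨x, y⟩ = x·y₀ − y₀·x` is a generalized
Malcev algebra: the bracket is bilinear, right anti-commutative, and satisfies the
three Hu-Liu angle identities. -/
theorem alternative_Z2_gives_generalized_Malcev
    (k : Type*) [Field k] (h2 : (2 : k) ≠ 0) (h3 : (3 : k) ≠ 0)
    (A : Type*) [NonUnitalNonAssocRing A] [Module k A]
    [SMulCommClass k A A] [IsScalarTower k A A]
    -- `A` is alternative
    (haltl : ∀ x y : A, x * (x * y) = (x * x) * y)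
    (haltr : ∀ x y : A, (y * x) * x = y * (x * x))
    -- `A = A₀ ⊕ A₁` with `p` the projection onto `A₀`
    (A0 A1 : Submodule k A) (p : A →ₗ[k] A)
    (hp0 : ∀ a : A, p a ∈ A0) (hp1 : ∀ a : A, a - p a ∈ A1)
    (hproj : ∀ y0 ∈ A0, ∀ y1 ∈ A1, p (y0 + y1) = y0)
    (h00 : ∀ a ∈ A0, ∀ b ∈ A0, a * b ∈ A0)
    (h01 : ∀ a ∈ A0, ∀ b ∈ A1, a * b ∈ A1)
    (h10 : ∀ a ∈ A1, ∀ b ∈ A0, a * b ∈ A1)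
    (h11 : ∀ a ∈ A1, ∀ b ∈ A1, a * b = 0) :
    -- bilinearity of the angle bracket
    (∀ x y z : A, angleBracket p (x + y) z = angleBracket p x z + angleBracket p y z) ∧
    (∀ x y z : A, angleBracket p x (y + z) = angleBracket p x y + angleBracket p x z) ∧
    (∀ (c : k) (x y : A), angleBracket p (c • x) y = c • angleBracket p x y) ∧
    (∀ (c : k) (x y : A), angleBracket p x (c • y) = c • angleBracket p x y) ∧
    -- right anti-commutativity
    (∀ x y z : A, angleBracket p x (angleBracket p y z)
      = - angleBracket p x (angleBracket p z y)) ∧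
    -- Hu-Liu angle identity (i)
    (∀ x y z : A,
      angleBracket p (angleBracket p x y) (angleBracket p x z)
          - angleBracket p (angleBracket p x z) (angleBracket p x y)
        = angleBracket p (angleBracket p (angleBracket p x y) z) x
          - angleBracket p x (angleBracket p (angleBracket p x y) z)
          + angleBracket p x (angleBracket p x (angleBracket p y z))
          - angleBracket p (angleBracket p x (angleBracket p y z)) x
          + angleBracket p (angleBracket p x (angleBracket p x z)) y
          - angleBracket p (angleBracket p (angleBracket p x z) x) y) ∧
    -- Hu-Liu angle identity (ii)
    (∀ x y z : A,
      angleBracket p (angleBracket p y x) (angleBracket p x z)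
        = angleBracket p (angleBracket p (angleBracket p y x) z) x
          - angleBracket p y (angleBracket p (angleBracket p x z) x)
          - angleBracket p (angleBracket p (angleBracket p y z) x) x) ∧
    -- Hu-Liu angle identity (iii)
    (∀ x y z : A,
      angleBracket p (angleBracket p z x) (angleBracket p y x)
        = angleBracket p (angleBracket p z (angleBracket p x y)) x
          + angleBracket p (angleBracket p (angleBracket p z y) x) x
          - angleBracket p (angleBracket p (angleBracket p z x) x) y) :=
  alternative_Z2_gives_generalized_Malcev_general k A haltl haltr A0 A1 p hp0 hp1 hproj h00 h01 h10
end

section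
/- Let (M, +, ⟨ , ⟩) be a generalized Malcev algebra over a field k of characteristic not 2 or 3. Let M^ann be the k-linear span of the set {J⟨x, x, y⟩ : x, y ∈ M} ∪ {⟨x, x⟩ : x ∈ M}, where J⟨x, y, z⟩ := ⟨⟨x, y⟩, z⟩ − ⟨x, ⟨y, z⟩⟩ − ⟨⟨x, z⟩, y⟩ is the right Jacobian. Then M^ann is an ideal of M, i.e., ⟨M^ann, M⟩ ⊆ M^ann and ⟨M, M^ann⟩ ⊆ M^ann. -/
def rightJacobian {k M : Type*} [Field k] [AddCommGroup M] [Module k M]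
    (br : M →ₗ[k] M →ₗ[k] M) (x y z : M) : M :=
  br (br x y) z - br x (br y z) - br (br x z) y

/-!
Right anti-commutativity makes every `⟨a, ⟨t, t⟩⟩` vanish (as `2 ≠ 0`), and with one more use of it
`⟨M, M^ann⟩ = 0`. For the other
inclusion, note that `⟨a, b⟩ + ⟨b, a⟩` is a difference of squares and
`⟨⟨t, t⟩, w⟩ = J⟨t, t, w⟩ + (⟨t, ⟨t, w⟩⟩ + ⟨⟨t, w⟩, t⟩)`, so both lie in `M^ann`; it therefore
suffices that `⟨⟨⟨x, x⟩, y⟩, z⟩ ∈ M^ann`, and a linear combination of the three angle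
identities, some of them polarized, writes twice this element as twice a combination of
generators and symmetric products.
-/

namespace GeneralizedMalcev

variable {k M : Type*} [Field k] [AddCommGroup M] [Module k M]

structure IsGeneralizedMalcev (br : M →ₗ[k] M →ₗ[k] M) : Prop where
  right_anticomm : ∀ x y z : M, br x (br y z) = - br x (br z y)
  angle_one : ∀ x y z : M,
    br (br x y) (br x z) - br (br x z) (br x y)
      = br (br (br x y) z) x - br x (br (br x y) z)
        + br x (br x (br y z)) - br (br x (br y z)) x
        + br (br x (br x z)) y - br (br (br x z) x) y
  angle_two : ∀ x y z : M,
    br (br y x) (br x z)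
      = br (br (br y x) z) x - br y (br (br x z) x) - br (br (br y z) x) x
  angle_three : ∀ x y z : M,
    br (br z x) (br y x)
      = br (br z (br x y)) x + br (br (br z y) x) x - br (br (br z x) x) y

def annihilator (br : M →ₗ[k] M →ₗ[k] M) : Submodule k M :=
  Submodule.span k ({a : M | ∃ x y : M, a = rightJacobian br x x y} ∪ {a : M | ∃ x : M, a = br x x})

variable {br : M →ₗ[k] M →ₗ[k] M}

theorem apply_self_mem_annihilator (x : M) : br x x ∈ annihilator br :=
  Submodule.subset_span (Or.inr ⟨x, rfl⟩)

theorem rightJacobian_mem_annihilator (x y : M) : rightJacobian br x x y ∈ annihilator br :=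
  Submodule.subset_span (Or.inl ⟨x, y, rfl⟩)

theorem apply_add_apply_swap_eq (a b : M) :
    br a b + br b a = br (a + b) (a + b) - br a a - br b b := by
  simp only [map_add, LinearMap.add_apply]
  abel

theorem apply_add_apply_swap_mem_annihilator (a b : M) : br a b + br b a ∈ annihilator br := by
  rw [apply_add_apply_swap_eq]
  exact sub_mem (sub_mem (apply_self_mem_annihilator _) (apply_self_mem_annihilator _))
    (apply_self_mem_annihilator _)

theorem apply_apply_self_mem_annihilator (t w : M) : br (br t t) w ∈ annihilator br := by
  have h : br (br t t) w = rightJacobian br t t w + (br t (br t w) + br (br t w) t) := by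
    simp only [rightJacobian]
    abel
  rw [h]
  exact add_mem (rightJacobian_mem_annihilator t w) (apply_add_apply_swap_mem_annihilator _ _)

theorem apply_add_apply_swap_apply_mem_annihilator (a b c : M) :
    br (br a b + br b a) c ∈ annihilator br := by
  rw [apply_add_apply_swap_eq]
  simp only [map_sub, LinearMap.sub_apply]
  exact sub_mem (sub_mem (apply_apply_self_mem_annihilator _ _)
    (apply_apply_self_mem_annihilator _ _)) (apply_apply_self_mem_annihilator _ _)

theorem apply_apply_self_eq_zero (h2 : (2 : k) ≠ 0)
    (rac : ∀ x y z : M, br x (br y z) = - br x (br z y)) (a t : M) : br a (br t t) = 0 := by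
  have h : (2 : k) • br a (br t t) = 0 := by
    rw [two_smul]
    nth_rewrite 1 [rac a t t]
    exact neg_add_cancel _
  exact (smul_eq_zero.mp h).resolve_left h2

theorem apply_eq_zero_of_mem_annihilator (h2 : (2 : k) ≠ 0)
    (rac : ∀ x y z : M, br x (br y z) = - br x (br z y)) (x : M) {u : M}
    (hu : u ∈ annihilator br) : br x u = 0 := by
  refine LinearMap.mem_ker.mp (Submodule.span_le.mpr ?_ hu)
  rintro a (⟨t, w, rfl⟩ | ⟨t, rfl⟩)
  · change br x (rightJacobian br t t w) = 0
    simp only [rightJacobian, map_sub]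
    rw [rac x (br t t) w, apply_apply_self_eq_zero h2 rac w t, map_zero, rac x t (br t w)]
    abel
  · exact apply_apply_self_eq_zero h2 rac x t

theorem two_smul_apply_apply_apply_self_eq (h2 : (2 : k) ≠ 0) (hM : IsGeneralizedMalcev br)
    (x y z : M) :
    (2 : k) • br (br (br x x) y) z
      = (2 : k) • (-rightJacobian br x x (br y z)
          + (br x (br (br x y) z) + br (br (br x y) z) x)
          - (br x (br (br x z) y) + br (br (br x z) y) x)
          + (br y (br (br x x) z) + br (br (br x x) z) y)) := by
  obtain ⟨rac, hl1, hl2, hl3⟩ := hM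
  have rac' : br x (br x (br y z)) = - br x (br x (br z y)) := by
    rw [rac x y z, map_neg]
  have hyz : br y (br z (br x x)) = 0 := by
    rw [apply_apply_self_eq_zero h2 rac z x, map_zero]
  have p1 := hl2 (x + y) x z
  have p2 := hl3 (x + y) z x
  have p3 := hl2 (x + z) x y
  simp only [map_add, LinearMap.add_apply] at p1 p2 p3
  unfold rightJacobian
  linear_combination (norm := module)
    (-1 : k) • hl1 x y z + (2 : k) • p1 + (-2 : k) • hl2 x x z + (-2 : k) • hl2 y x z
    + p2 - hl3 x z x - hl3 y z x
    - p3 + hl2 x x y + hl2 z x y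
    + (-2 : k) • rac x x (br y z) - rac' + rac x x (br z y)
    + (-2 : k) • rac y z (br x x) + (2 : k) • hyz - rac (br x y) x z

theorem apply_apply_apply_self_mem_annihilator (h2 : (2 : k) ≠ 0) (hM : IsGeneralizedMalcev br)
    (x y z : M) : br (br (br x x) y) z ∈ annihilator br := by
  rw [smul_right_injective M h2 (two_smul_apply_apply_apply_self_eq h2 hM x y z)]
  refine add_mem (sub_mem (add_mem (neg_mem ?_) ?_) ?_) ?_
  · exact rightJacobian_mem_annihilator x (br y z)
  all_goals exact apply_add_apply_swap_mem_annihilator _ _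

theorem apply_rightJacobian_mem_annihilator (h2 : (2 : k) ≠ 0) (hM : IsGeneralizedMalcev br)
    (a b c : M) : br (rightJacobian br a a b) c ∈ annihilator br := by
  have h : br (rightJacobian br a a b) c
      = br (br (br a a) b) c - br (br a (br a b) + br (br a b) a) c := by
    simp only [rightJacobian, map_sub, map_add, LinearMap.sub_apply, LinearMap.add_apply]
    abel
  rw [h]
  exact sub_mem (apply_apply_apply_self_mem_annihilator h2 hM a b c)
    (apply_add_apply_swap_apply_mem_annihilator a (br a b) c)

theorem apply_mem_annihilator_of_mem (h2 : (2 : k) ≠ 0) (hM : IsGeneralizedMalcev br)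
    {u : M} (hu : u ∈ annihilator br) (x : M) : br u x ∈ annihilator br := by
  suffices hle : annihilator br ≤ (annihilator br).comap (br.flip x) from hle hu
  refine Submodule.span_le.mpr ?_
  rintro a (⟨t, w, rfl⟩ | ⟨t, rfl⟩)
  · exact apply_rightJacobian_mem_annihilator h2 hM t w x
  · exact apply_apply_self_mem_annihilator t x

end GeneralizedMalcev

open GeneralizedMalcev in
theorem annihilator_isIdeal_of_generalizedMalcev_general
    (k : Type*) [Field k] (h2 : (2 : k) ≠ 0)
    (M : Type*) [AddCommGroup M] [Module k M]
    (br : M →ₗ[k] M →ₗ[k] M)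
    -- right anti-commutativity
    (rac : ∀ x y z : M, br x (br y z) = - br x (br z y))
    -- Hu-Liu angle identity (i)
    (hl1 : ∀ x y z : M,
      br (br x y) (br x z) - br (br x z) (br x y)
        = br (br (br x y) z) x - br x (br (br x y) z)
          + br x (br x (br y z)) - br (br x (br y z)) x
          + br (br x (br x z)) y - br (br (br x z) x) y)
    -- Hu-Liu angle identity (ii)
    (hl2 : ∀ x y z : M,
      br (br y x) (br x z)
        = br (br (br y x) z) x - br y (br (br x z) x) - br (br (br y z) x) x)
    -- Hu-Liu angle identity (iii)
    (hl3 : ∀ x y z : M,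
      br (br z x) (br y x)
        = br (br z (br x y)) x + br (br (br z y) x) x - br (br (br z x) x) y)
    (Mann : Submodule k M)
    (hMann : Mann = Submodule.span k
      ({a : M | ∃ x y : M, a = rightJacobian br x x y} ∪ {a : M | ∃ x : M, a = br x x})) :
    ∀ u ∈ Mann, ∀ x : M, br u x ∈ Mann ∧ br x u ∈ Mann := by
  have hM : IsGeneralizedMalcev br := ⟨rac, hl1, hl2, hl3⟩
  change Mann = annihilator br at hMann
  subst hMann
  intro u hu x
  refine ⟨apply_mem_annihilator_of_mem h2 hM hu x, ?_⟩
  rw [apply_eq_zero_of_mem_annihilator h2 rac x hu]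
  exact zero_mem _

/-- In a generalized Malcev algebra `(M, +, ⟨,⟩)` over a field of characteristic not
`2` or `3`, the annihilator `M^ann = span({J⟨x,x,y⟩} ∪ {⟨x,x⟩})` is an ideal:
`⟨M^ann, M⟩ ⊆ M^ann` and `⟨M, M^ann⟩ ⊆ M^ann`. -/
theorem annihilator_isIdeal_of_generalizedMalcev
    (k : Type*) [Field k] (h2 : (2 : k) ≠ 0) (h3 : (3 : k) ≠ 0)
    (M : Type*) [AddCommGroup M] [Module k M]
    (br : M →ₗ[k] M →ₗ[k] M)
    -- right anti-commutativity
    (rac : ∀ x y z : M, br x (br y z) = - br x (br z y))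
    -- Hu-Liu angle identity (i)
    (hl1 : ∀ x y z : M,
      br (br x y) (br x z) - br (br x z) (br x y)
        = br (br (br x y) z) x - br x (br (br x y) z)
          + br x (br x (br y z)) - br (br x (br y z)) x
          + br (br x (br x z)) y - br (br (br x z) x) y)
    -- Hu-Liu angle identity (ii)
    (hl2 : ∀ x y z : M,
      br (br y x) (br x z)
        = br (br (br y x) z) x - br y (br (br x z) x) - br (br (br y z) x) x)
    -- Hu-Liu angle identity (iii)
    (hl3 : ∀ x y z : M,
      br (br z x) (br y x)
        = br (br z (br x y)) x + br (br (br z y) x) x - br (br (br z x) x) y)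
    (Mann : Submodule k M)
    (hMann : Mann = Submodule.span k
      ({a : M | ∃ x y : M, a = rightJacobian br x x y} ∪ {a : M | ∃ x : M, a = br x x})) :
    ∀ u ∈ Mann, ∀ x : M, br u x ∈ Mann ∧ br x u ∈ Mann :=
  annihilator_isIdeal_of_generalizedMalcev_general k h2 M br rac hl1 hl2 hl3 Mann hMann
end

section
/- Let (M, +, ⟨ , ⟩) be a generalized Malcev algebra over a field k of characteristic not 2 or 3, and let M^ann be the k-linear span of {J⟨x, x, y⟩ : x, y ∈ M} ∪ {⟨x, x⟩ : x ∈ M}, where J⟨x, y, z⟩ := ⟨⟨x, y⟩, z⟩ − ⟨x, ⟨y, z⟩⟩ − ⟨⟨x, z⟩, y⟩. On the vector space E := (M/M^ann) × M^ann define the bracket [(x̄, a), (ȳ, b)] := (⟨x, y⟩ + M^ann, ⟨a, y⟩ − ⟨b, x⟩), where x̄ = x + M^ann and ȳ = y + M^ann. Then this bracket is well defined (independent of the chosen representatives x and y), and E is a Malcev algebra: the bracket is bilinear, anti-commutative, and satisfies the Malcev identity [[X,Y],[X,Z]] = [[[X,Y],Z],X] + [[[Y,Z],X],X] + [[[Z,X],X],Y]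 for all X, Y, Z ∈ E. (Equivalently, M^ann is a module over the Malcev algebra M/M^ann under the action x̄·a = −a·x̄ := −⟨a, x⟩.) -/
section Identities

variable {k L : Type*} [Field k] [AddCommGroup L] [Module k L]

def RightAnticomm (br : L →ₗ[k] L →ₗ[k] L) : Prop :=
  ∀ x y z, br x (br y z) = -br x (br z y)

def AngleIdentity₁ (br : L →ₗ[k] L →ₗ[k] L) : Prop :=
  ∀ x y z, br (br x y) (br x z) - br (br x z) (br x y)
    = br (br (br x y) z) x - br x (br (br x y) z)
      + br x (br x (br y z)) - br (br x (br y z)) x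
      + br (br x (br x z)) y - br (br (br x z) x) y

def AngleIdentity₂ (br : L →ₗ[k] L →ₗ[k] L) : Prop :=
  ∀ x y z, br (br y x) (br x z)
    = br (br (br y x) z) x - br y (br (br x z) x) - br (br (br y z) x) x

def AngleIdentity₃ (br : L →ₗ[k] L →ₗ[k] L) : Prop :=
  ∀ x y z, br (br z x) (br y x)
    = br (br z (br x y)) x + br (br (br z y) x) x - br (br (br z x) x) y

def MalcevIdentity (br : L →ₗ[k] L →ₗ[k] L) : Prop :=
  ∀ x y z, br (br x y) (br x z)
    = br (br (br x y) z) x + br (br (br y z) x) x + br (br (br z x) x) y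

theorem malcevIdentity_of_anticomm_of_angleIdentity₁ {br : L →ₗ[k] L →ₗ[k] L}
    (h2 : (2 : k) ≠ 0) (hanti : ∀ x y, br x y = -br y x) (hl1 : AngleIdentity₁ br) :
    MalcevIdentity br := by
  intro x y z
  have hyz : br (br x (br y z)) x = -br (br (br y z) x) x := by
    rw [hanti x (br y z), LinearMap.map_neg₂]
  have hxxz : br (br x (br x z)) y = -br (br (br x z) x) y := by
    rw [hanti x (br x z), LinearMap.map_neg₂]
  have hxz : br (br (br x z) x) y = -br (br (br z x) x) y := by
    rw [hanti x z, LinearMap.map_neg₂, LinearMap.map_neg₂]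
  apply smul_right_injective L h2
  linear_combination (norm := module) hl1 x y z + hanti (br x z) (br x y)
    - hanti x (br (br x y) z) + hanti x (br x (br y z)) - (2 : k) • hyz + hxxz - (2 : k) • hxz

end Identities

section SplitNullExtension

variable {k L V : Type*} [Field k] [AddCommGroup L] [Module k L] [AddCommGroup V] [Module k V]
  (qbr : L →ₗ[k] L →ₗ[k] L) (act : V →ₗ[k] L →ₗ[k] V)

def splitNullExtBracket : L × V →ₗ[k] L × V →ₗ[k] L × V :=
  LinearMap.mk₂ k (fun X Y => (qbr X.1 Y.1, act X.2 Y.1 - act Y.2 X.1))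
    (fun X X' Y => by ext <;> simp; abel)
    (fun c X Y => by ext <;> simp [smul_sub])
    (fun X Y Y' => by ext <;> simp; abel)
    (fun c X Y => by ext <;> simp [smul_sub])

@[simp]
theorem splitNullExtBracket_apply (X Y : L × V) :
    splitNullExtBracket qbr act X Y = (qbr X.1 Y.1, act X.2 Y.1 - act Y.2 X.1) :=
  rfl

theorem splitNullExtBracket_anticomm {qbr} (hanti : ∀ x y, qbr x y = -qbr y x) (X Y : L × V) :
    splitNullExtBracket qbr act X Y = -splitNullExtBracket qbr act Y X := by
  ext <;> simp [hanti X.1]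

end SplitNullExtension

section AnnihilatorIdeal

variable {k M : Type*} [Field k] [AddCommGroup M] [Module k M]

structure IsAnnihilatorIdeal (br : M →ₗ[k] M →ₗ[k] M) (N : Submodule k M) : Prop where
  br_mem : ∀ a ∈ N, ∀ y, br a y ∈ N
  br_eq_zero : ∀ a ∈ N, ∀ u, br u a = 0

namespace IsAnnihilatorIdeal

variable {br : M →ₗ[k] M →ₗ[k] M} {N : Submodule k M} (hN : IsAnnihilatorIdeal br N)

def quotientBracket : (M ⧸ N) →ₗ[k] (M ⧸ N) →ₗ[k] (M ⧸ N) :=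
  (br.compr₂ N.mkQ).liftQ₂ N N
    (fun a ha => LinearMap.ext fun y => by simpa using hN.br_mem a ha y)
    (fun a ha => LinearMap.ext fun x => by simp [hN.br_eq_zero a ha x])

@[simp]
theorem quotientBracket_mk (x y : M) :
    hN.quotientBracket (Submodule.Quotient.mk x) (Submodule.Quotient.mk y)
      = Submodule.Quotient.mk (br x y) :=
  rfl

def quotientRightAction : N →ₗ[k] (M ⧸ N) →ₗ[k] N :=
  let act : N →ₗ[k] M →ₗ[k] N := LinearMap.mk₂ k (fun a y => ⟨br a y, hN.br_mem a a.2 y⟩)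
    (fun _ _ _ => by ext; simp) (fun _ _ _ => by ext; simp) (fun _ _ _ => by ext; simp)
    (fun _ _ _ => by ext; simp)
  (N.liftQ act.flip fun b hb => LinearMap.ext fun a => by
    ext; simp [act, hN.br_eq_zero b hb a]).flip

@[simp]
theorem coe_quotientRightAction_mk (a : N) (y : M) :
    (hN.quotientRightAction a (Submodule.Quotient.mk y) : M) = br a y :=
  rfl

theorem quotientBracket_anticomm (hsym : ∀ x y, br x y + br y x ∈ N) (x y : M ⧸ N) :
    hN.quotientBracket x y = -hN.quotientBracket y x := by
  induction x using Submodule.Quotient.induction_on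
  induction y using Submodule.Quotient.induction_on
  rw [quotientBracket_mk, quotientBracket_mk, eq_neg_iff_add_eq_zero, ← Submodule.Quotient.mk_add,
    Submodule.Quotient.mk_eq_zero]
  exact hsym _ _

theorem malcevIdentity_quotientBracket (h2 : (2 : k) ≠ 0) (hsym : ∀ x y, br x y + br y x ∈ N)
    (hl1 : AngleIdentity₁ br) :
    MalcevIdentity hN.quotientBracket := by
  refine malcevIdentity_of_anticomm_of_angleIdentity₁ h2 (hN.quotientBracket_anticomm hsym)
    fun x y z => ?_
  induction x using Submodule.Quotient.induction_on with | H x => ?_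
  induction y using Submodule.Quotient.induction_on with | H y => ?_
  induction z using Submodule.Quotient.induction_on with | H z => ?_
  simp only [quotientBracket_mk, ← Submodule.Quotient.mk_sub, ← Submodule.Quotient.mk_add]
  exact congrArg _ (hl1 x y z)

theorem angleIdentity₁_linearized (hN : IsAnnihilatorIdeal br N) (hl1 : AngleIdentity₁ br)
    {a : M} (ha : a ∈ N) (x y z : M) :
    br (br a y) (br x z) - br (br a z) (br x y)
      = br (br (br a y) z) x - br a (br (br x y) z)
        + br a (br x (br y z)) - br (br a (br y z)) x
        + br (br a (br x z)) y - br (br (br a z) x) y := by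
  have ha₁ : ∀ u, br u a = 0 := hN.br_eq_zero a ha
  have ha₂ : ∀ u v, br u (br a v) = 0 := fun u v => hN.br_eq_zero _ (hN.br_mem a ha v) u
  have ha₃ : ∀ u v w, br u (br (br a v) w) = 0 := fun u v w =>
    hN.br_eq_zero _ (hN.br_mem _ (hN.br_mem a ha v) w) u
  have h := hl1 (x + a) y z
  simp only [map_add, LinearMap.add_apply, ha₁, ha₂, ha₃, add_zero] at h
  linear_combination (norm := module) h - hl1 x y z

theorem malcevIdentity_splitNullExtBracket (h2 : (2 : k) ≠ 0)
    (hsym : ∀ x y, br x y + br y x ∈ N) (rac : RightAnticomm br)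
    (hl1 : AngleIdentity₁ br) (hl2 : AngleIdentity₂ br) (hl3 : AngleIdentity₃ br) :
    MalcevIdentity (splitNullExtBracket hN.quotientBracket hN.quotientRightAction) := by
  rintro ⟨x, a⟩ ⟨y, b⟩ ⟨z, c⟩
  induction x using Submodule.Quotient.induction_on with | H x => ?_
  induction y using Submodule.Quotient.induction_on with | H y => ?_
  induction z using Submodule.Quotient.induction_on with | H z => ?_
  ext
  · simpa using hN.malcevIdentity_quotientBracket h2 hsym hl1 (Submodule.Quotient.mk x)
      (Submodule.Quotient.mk y) (Submodule.Quotient.mk z)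
  · have hsw₁ : br (br (a : M) (br z x)) y = -br (br a (br x z)) y := by
      rw [rac a z x, LinearMap.map_neg₂]
    have hsw₂ : br (b : M) (br x (br x z)) = -br b (br x (br z x)) := by
      rw [rac x x z, map_neg]
    simp only [splitNullExtBracket_apply, quotientBracket_mk, map_sub, LinearMap.sub_apply,
      AddSubgroupClass.coe_sub, coe_quotientRightAction_mk, Prod.mk_add_mk, Submodule.coe_add]
    linear_combination (norm := module) hN.angleIdentity₁_linearized hl1 a.2 x y z
      + rac a (br y z) x + hsw₁ - hl2 x b z + rac b (br x z) x + rac b (br z x) x - hsw₂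
      + rac (br c x) x y - hl3 x y c

end IsAnnihilatorIdeal

end AnnihilatorIdeal

section Annihilator

variable {k M : Type*} [Field k] [AddCommGroup M] [Module k M] (br : M →ₗ[k] M →ₗ[k] M)

def malcevAnnihilator : Submodule k M :=
  Submodule.span k ({a | ∃ x y, a = rightJacobian br x x y} ∪ {a | ∃ x, a = br x x})

theorem br_self_mem_malcevAnnihilator (x : M) : br x x ∈ malcevAnnihilator br :=
  Submodule.subset_span (Or.inr ⟨x, rfl⟩)

theorem rightJacobian_self_mem_malcevAnnihilator (x y : M) :
    rightJacobian br x x y ∈ malcevAnnihilator br :=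
  Submodule.subset_span (Or.inl ⟨x, y, rfl⟩)

theorem br_add_br_swap_mem_malcevAnnihilator (x y : M) :
    br x y + br y x ∈ malcevAnnihilator br := by
  have h : br (x + y) (x + y) - br x x - br y y = br x y + br y x := by
    simp only [map_add, LinearMap.add_apply]; abel
  rw [← h]
  exact sub_mem (sub_mem (br_self_mem_malcevAnnihilator br _)
    (br_self_mem_malcevAnnihilator br x)) (br_self_mem_malcevAnnihilator br y)

theorem br_br_self_left_mem_malcevAnnihilator (x y : M) :
    br (br x x) y ∈ malcevAnnihilator br := by
  have h : rightJacobian br x x y + (br x (br x y) + br (br x y) x) = br (br x x) y := by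
    simp only [rightJacobian]; abel
  rw [← h]
  exact add_mem (rightJacobian_self_mem_malcevAnnihilator br x y)
    (br_add_br_swap_mem_malcevAnnihilator br x (br x y))

theorem br_br_add_br_br_swap_mem_malcevAnnihilator (u v w : M) :
    br (br u v) w + br (br v u) w ∈ malcevAnnihilator br := by
  have h : br (br (u + v) (u + v)) w - br (br u u) w - br (br v v) w
      = br (br u v) w + br (br v u) w := by
    simp only [map_add, LinearMap.add_apply]; abel
  rw [← h]
  exact sub_mem (sub_mem (br_br_self_left_mem_malcevAnnihilator br _ w)
    (br_br_self_left_mem_malcevAnnihilator br u w)) (br_br_self_left_mem_malcevAnnihilator br v w)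

variable {br}

theorem br_br_self_eq_zero (h2 : (2 : k) ≠ 0) (rac : RightAnticomm br) (u x : M) :
    br u (br x x) = 0 := by
  have h : (2 : k) • br u (br x x) = 0 := by
    linear_combination (norm := module) rac u x x
  simpa [h2] using h

theorem br_eq_zero_of_mem_malcevAnnihilator (h2 : (2 : k) ≠ 0) (rac : RightAnticomm br) {a : M}
    (ha : a ∈ malcevAnnihilator br) (u : M) : br u a = 0 := by
  suffices malcevAnnihilator br ≤ LinearMap.ker (br u) from this ha
  refine Submodule.span_le.mpr ?_
  rintro _ (⟨x, y, rfl⟩ | ⟨x, rfl⟩)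
  · simp only [SetLike.mem_coe, LinearMap.mem_ker, rightJacobian, map_sub]
    rw [rac u (br x x) y, br_br_self_eq_zero h2 rac, map_zero, rac u x (br x y)]
    abel
  · exact br_br_self_eq_zero h2 rac u x

theorem br_mem_malcevAnnihilator_of_mem (h2 : (2 : k) ≠ 0) (rac : RightAnticomm br) {a : M}
    (ha : a ∈ malcevAnnihilator br) (y : M) : br a y ∈ malcevAnnihilator br := by
  suffices malcevAnnihilator br ≤ (malcevAnnihilator br).comap (br.flip y) from this ha
  refine Submodule.span_le.mpr ?_
  rintro _ (⟨x, w, rfl⟩ | ⟨x, rfl⟩)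
  · have h : br (br (br x x) w) y + br (br w (br x x)) y
        - (br (br x (br x w)) y + br (br (br x w) x) y) = br (rightJacobian br x x w) y := by
      simp only [rightJacobian, br_br_self_eq_zero h2 rac, map_sub, LinearMap.sub_apply,
        LinearMap.zero_apply, map_zero]
      abel
    simp only [SetLike.mem_coe, Submodule.mem_comap, LinearMap.flip_apply, ← h]
    exact sub_mem (br_br_add_br_br_swap_mem_malcevAnnihilator br _ w y)
      (br_br_add_br_br_swap_mem_malcevAnnihilator br x _ y)
  · exact br_br_self_left_mem_malcevAnnihilator br x y

theorem malcevAnnihilator_isAnnihilatorIdeal (h2 : (2 : k) ≠ 0) (rac : RightAnticomm br) :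
    IsAnnihilatorIdeal br (malcevAnnihilator br) where
  br_mem _ ha y := br_mem_malcevAnnihilator_of_mem h2 rac ha y
  br_eq_zero _ ha u := br_eq_zero_of_mem_malcevAnnihilator h2 rac ha u

end Annihilator

theorem split_null_extension_isMalcev_general
    (k : Type*) [Field k] (h2 : (2 : k) ≠ 0)
    (M : Type*) [AddCommGroup M] [Module k M]
    (br : M →ₗ[k] M →ₗ[k] M)
    (rac : ∀ x y z : M, br x (br y z) = - br x (br z y))
    (hl1 : ∀ x y z : M,
      br (br x y) (br x z) - br (br x z) (br x y)
        = br (br (br x y) z) x - br x (br (br x y) z)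
          + br x (br x (br y z)) - br (br x (br y z)) x
          + br (br x (br x z)) y - br (br (br x z) x) y)
    (hl2 : ∀ x y z : M,
      br (br y x) (br x z)
        = br (br (br y x) z) x - br y (br (br x z) x) - br (br (br y z) x) x)
    (hl3 : ∀ x y z : M,
      br (br z x) (br y x)
        = br (br z (br x y)) x + br (br (br z y) x) x - br (br (br z x) x) y)
    (Mann : Submodule k M)
    (hMann : Mann = Submodule.span k
      ({a : M | ∃ x y : M, a = rightJacobian br x x y} ∪ {a : M | ∃ x : M, a = br x x})) :
    ∃ ebr : ((M ⧸ Mann) × Mann) →ₗ[k] ((M ⧸ Mann) × Mann) →ₗ[k] ((M ⧸ Mann) × Mann),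
      -- well defined, given on representatives by `[(x̄,a),(ȳ,b)] = (⟨x,y⟩‾, ⟨a,y⟩ − ⟨b,x⟩)`
      (∀ (x y : M) (a b : Mann),
        (ebr (Submodule.Quotient.mk x, a) (Submodule.Quotient.mk y, b)).1
            = (Submodule.Quotient.mk (br x y) : M ⧸ Mann) ∧
        ((ebr (Submodule.Quotient.mk x, a) (Submodule.Quotient.mk y, b)).2 : M)
            = br (a : M) y - br (b : M) x) ∧
      -- anti-commutativity
      (∀ X Y : (M ⧸ Mann) × Mann, ebr X Y = - ebr Y X) ∧
      -- Malcev identity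
      (∀ X Y Z : (M ⧸ Mann) × Mann,
        ebr (ebr X Y) (ebr X Z)
          = ebr (ebr (ebr X Y) Z) X + ebr (ebr (ebr Y Z) X) X
            + ebr (ebr (ebr Z X) X) Y) := by
  obtain rfl : Mann = malcevAnnihilator br := hMann
  have hN := malcevAnnihilator_isAnnihilatorIdeal h2 rac
  have hsym := br_add_br_swap_mem_malcevAnnihilator br
  refine ⟨splitNullExtBracket hN.quotientBracket hN.quotientRightAction, fun x y a b => ?_,
    splitNullExtBracket_anticomm _ (hN.quotientBracket_anticomm hsym),
    hN.malcevIdentity_splitNullExtBracket h2 hsym rac hl1 hl2 hl3⟩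
  simp

/-- For a generalized Malcev algebra `(M, +, ⟨,⟩)` over a field of characteristic
not `2` or `3` with annihilator `M^ann = span({J⟨x,x,y⟩} ∪ {⟨x,x⟩})`, the split
null extension `E = (M/M^ann) × M^ann` with bracket
`[(x̄,a),(ȳ,b)] = (⟨x,y⟩‾, ⟨a,y⟩ − ⟨b,x⟩)` is well defined and is a Malcev algebra
(equivalently, `M^ann` is a module over the Malcev algebra `M/M^ann` via
`x̄·a = −a·x̄ = −⟨a,x⟩`). -/
theorem split_null_extension_isMalcev
    (k : Type*) [Field k] (h2 : (2 : k) ≠ 0) (h3 : (3 : k) ≠ 0)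
    (M : Type*) [AddCommGroup M] [Module k M]
    (br : M →ₗ[k] M →ₗ[k] M)
    (rac : ∀ x y z : M, br x (br y z) = - br x (br z y))
    (hl1 : ∀ x y z : M,
      br (br x y) (br x z) - br (br x z) (br x y)
        = br (br (br x y) z) x - br x (br (br x y) z)
          + br x (br x (br y z)) - br (br x (br y z)) x
          + br (br x (br x z)) y - br (br (br x z) x) y)
    (hl2 : ∀ x y z : M,
      br (br y x) (br x z)
        = br (br (br y x) z) x - br y (br (br x z) x) - br (br (br y z) x) x)
    (hl3 : ∀ x y z : M,
      br (br z x) (br y x)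
        = br (br z (br x y)) x + br (br (br z y) x) x - br (br (br z x) x) y)
    (Mann : Submodule k M)
    (hMann : Mann = Submodule.span k
      ({a : M | ∃ x y : M, a = rightJacobian br x x y} ∪ {a : M | ∃ x : M, a = br x x})) :
    ∃ ebr : ((M ⧸ Mann) × Mann) →ₗ[k] ((M ⧸ Mann) × Mann) →ₗ[k] ((M ⧸ Mann) × Mann),
      -- well defined, given on representatives by `[(x̄,a),(ȳ,b)] = (⟨x,y⟩‾, ⟨a,y⟩ − ⟨b,x⟩)`
      (∀ (x y : M) (a b : Mann),
        (ebr (Submodule.Quotient.mk x, a) (Submodule.Quotient.mk y, b)).1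
            = (Submodule.Quotient.mk (br x y) : M ⧸ Mann) ∧
        ((ebr (Submodule.Quotient.mk x, a) (Submodule.Quotient.mk y, b)).2 : M)
            = br (a : M) y - br (b : M) x) ∧
      -- anti-commutativity
      (∀ X Y : (M ⧸ Mann) × Mann, ebr X Y = - ebr Y X) ∧
      -- Malcev identity
      (∀ X Y Z : (M ⧸ Mann) × Mann,
        ebr (ebr X Y) (ebr X Z)
          = ebr (ebr (ebr X Y) Z) X + ebr (ebr (ebr Y Z) X) X
            + ebr (ebr (ebr Z X) X) Y) :=
  split_null_extension_isMalcev_general k h2 M br rac hl1 hl2 hl3 Mann hMann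
end
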